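/- Let K be the (k+1)-fold join of boundaries of d-dimensional simplexes, K = ∂Δ_{d+1} * ... * ∂Δ_{d+1} (k+1 factors), for d,k ≥ 1. Then the d-skeleton K^{(d)} is d-lumpless: for every nonempty proper subset S of the vertex set of K, f_0(K^{(d)}[S]) / f_d(K^{(d)}[S]) > f_0(K^{(d)}) / f_d(K^{(d)}), where K^{(d)}[S] is the induced subcomplex on S and f_i denotes the number of i-dimensional faces. -/

import Mathlib

open scoped BigOperators ENNReal

/-- An abstract simplicial complex on vertex type `V`: a downward-closed set of finsets. -/
structure Cx (V : Type*) where
  faces : Set (Finset V)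
  down : ∀ ⦃s t : Finset V⦄, s ∈ faces → t ⊆ s → t ∈ faces

namespace Cx

variable {V : Type*}

/-- `fcount K i` is the number of `i`-dimensional faces of `K`. -/
noncomputable def fcount (K : Cx V) (i : ℕ) : ℕ :=
  Nat.card {s : Finset V // s ∈ K.faces ∧ s.card = i + 1}

/-- Induced subcomplex on a vertex subset `S`. -/
def induced (K : Cx V) (S : Finset V) : Cx V :=
  ⟨{s | s ∈ K.faces ∧ s ⊆ S}, fun s t hs hts => ⟨K.down hs.1 hts, hts.trans hs.2⟩⟩

/-- The `d`-skeleton of a complex. -/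
def skel (K : Cx V) (d : ℕ) : Cx V :=
  ⟨{s | s ∈ K.faces ∧ s.card ≤ d + 1}, fun s t hs hts =>
    ⟨K.down hs.1 hts, le_trans (Finset.card_le_card hts) hs.2⟩⟩

/-- Number of vertices of a complex. -/
noncomputable def vertCount (K : Cx V) : ℕ := Nat.card {v : V // {v} ∈ K.faces}

/-- The link of a vertex. -/
def linkCx [DecidableEq V] (K : Cx V) (v : V) : Cx V :=
  ⟨{τ | v ∉ τ ∧ insert v τ ∈ K.faces},
   fun s t hs hts => ⟨fun h => hs.1 (hts h), K.down hs.2 (Finset.insert_subset_insert v hts)⟩⟩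

end Cx

/-- The `(k+1)`-fold join `∂Δ_{d+1} * ⋯ * ∂Δ_{d+1}` of boundaries of `d`-simplices:
a set of vertices is a face iff it misses at least one vertex of each join factor. -/
def Kjoin (d k : ℕ) : Cx (Fin (k+1) × Fin (d+1)) :=
  ⟨{s | ∀ m : Fin (k+1), ∃ i : Fin (d+1), (m, i) ∉ s},
   fun s t hs hts m => (hs m).imp fun _ hi h => hi (hts h)⟩

/-- The `d`-clique complex of `K`: faces are all vertex sets all of whose
`(d+1)`-subsets are faces of `K`. -/
def cliqueCx (d : ℕ) (K : Cx V) : Cx V :=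
  ⟨{s | ∀ t ⊆ s, t.card = d + 1 → t ∈ K.faces},
   fun s t hs hts u hut hu => hs u (hut.trans hts) hu⟩

section Chains

variable {V : Type*} [LinearOrder V]

/-- Simplicial boundary operator (with the augmentation convention: the boundary of a
vertex is the empty set with coefficient 1, so cycles compute *reduced* homology). -/
noncomputable def bdry (γ : Finset V →₀ ℤ) : Finset V →₀ ℤ :=
  γ.sum fun s c => ∑ v ∈ s, Finsupp.single (s.erase v)
    (c * (-1) ^ ((s.sort (· ≤ ·)).idxOf v))

/-- `γ` is a `k`-chain of the complex `K`. -/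
def IsChainOf (K : Cx V) (k : ℕ) (γ : Finset V →₀ ℤ) : Prop :=
  ∀ s ∈ γ.support, s ∈ K.faces ∧ s.card = k + 1

/-- `γ` is a (reduced) `k`-cycle of `K`. -/
def IsCycleOf (K : Cx V) (k : ℕ) (γ : Finset V →₀ ℤ) : Prop :=
  IsChainOf K k γ ∧ bdry γ = 0

/-- `γ` is a `k`-boundary in `K`. -/
def IsBoundaryOf (K : Cx V) (k : ℕ) (γ : Finset V →₀ ℤ) : Prop :=
  ∃ β, IsChainOf K (k+1) β ∧ bdry β = γ

/-- `γ` is a nontrivial `k`-cycle: it represents a nonzero class in reduced homology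
`H̃ₖ(K; ℤ)`. -/
def IsNontrivialCycle (K : Cx V) (k : ℕ) (γ : Finset V →₀ ℤ) : Prop :=
  IsCycleOf K k γ ∧ ¬ IsBoundaryOf K k γ

/-- The vertex support of a chain. -/
def vsupp (γ : Finset V →₀ ℤ) : Finset V := γ.support.biUnion id

/-- The restriction `γ ∩ link(v)` of a chain to the link of a vertex `v`: a `(k-1)`-face
`τ` gets the (signed) coefficient of `τ ∪ {v}` in `γ`. -/
noncomputable def restrictLink (v : V) (γ : Finset V →₀ ℤ) : Finset V →₀ ℤ :=
  γ.sum fun s c => if v ∈ s then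
    Finsupp.single (s.erase v) (c * (-1) ^ ((s.sort (· ≤ ·)).idxOf v)) else 0

end Chains

section Topology

open Classical in
/-- The geometric realization of a complex on a finite vertex set, as a subset of `V → ℝ`. -/
noncomputable def realizationSet {V : Type*} [Fintype V] (K : Cx V) : Set (V → ℝ) :=
  {f | (∀ v, 0 ≤ f v) ∧ (∑ v, f v) = 1 ∧ (Finset.univ.filter fun v => f v ≠ 0) ∈ K.faces}

/-- `K` is `k`-connected: every continuous map from a sphere `S^i`, `i ≤ k`, to the
geometric realization of `K` is nullhomotopic. -/
def KConn {V : Type*} [Fintype V] (K : Cx V) (k : ℕ) : Prop :=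
  ∀ i ≤ k, ∀ f : C(Metric.sphere (0 : EuclideanSpace ℝ (Fin (i+1))) 1, realizationSet K),
    ∃ y, ContinuousMap.Homotopic f (ContinuousMap.const _ y)

end Topology

section Domination

variable {V : Type*} [DecidableEq V]

/-- `s̃p_K(A)`: the set of vertices `v` for which some face `σ ⊆ A` satisfies
`σ ∪ {v} ∉ K`. -/
def spTilde (K : Cx V) (A : Finset V) : Set V :=
  {v | ∃ σ : Finset V, σ ∈ K.faces ∧ σ ⊆ A ∧ insert v σ ∉ K.faces}

/-- `A` is a strong dominating set of `K`. -/
def IsStrongDom (K : Cx V) (A : Finset V) : Prop := ∀ v : V, v ∈ spTilde K A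

/-- The strong domination number `γ̃(K)` (`⊤` if there is no strong dominating set). -/
noncomputable def gammaTilde (K : Cx V) : ℕ∞ :=
  sInf {n : ℕ∞ | ∃ A : Finset V, IsStrongDom K A ∧ (A.card : ℕ∞) = n}

end Domination

section StrongConn

variable {V : Type*} [DecidableEq V]

/-- A facet: a maximal face. -/
def IsFacet (K : Cx V) (s : Finset V) : Prop :=
  s ∈ K.faces ∧ ∀ t ∈ K.faces, s ⊆ t → t = s

/-- `K` is a strongly connected `k`-dimensional complex: pure of dimension `k` and any
two facets are joined by a chain of facets, consecutive ones sharing a `(k-1)`-face. -/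
def StronglyConnected (K : Cx V) (k : ℕ) : Prop :=
  (∃ s, s ∈ K.faces ∧ s.card = k + 1) ∧
  (∀ s, IsFacet K s → s.card = k + 1) ∧
  ∀ s t, IsFacet K s → IsFacet K t →
    Relation.ReflTransGen (fun a b => IsFacet K a ∧ IsFacet K b ∧ (a ∩ b).card = k) s t

end StrongConn

section Random

open MeasureTheory

/-- Bernoulli measure on `Bool` with parameter `p` (truncated at 1). -/
noncomputable def bern (p : ℝ≥0∞) : Measure Bool :=
  (PMF.ofFintype (fun b => cond b (min p 1) (1 - min p 1)) (by
    rw [Fintype.sum_bool]; simp only [cond_true, cond_false]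
    exact add_tsub_cancel_of_le (min_le_right _ _))).toMeasure

instance (p : ℝ≥0∞) : IsProbabilityMeasure (bern p) := by
  unfold bern; infer_instance

/-- Sample space for the random complex `G_d(n,p)`: a coin for each potential `d`-face. -/
abbrev RandOmega (d n : ℕ) := {s : Finset (Fin n) // s.card = d + 1} → Bool

/-- The law of `G_d(n,p)`: independent Bernoulli(p) coins for the `d`-faces. -/
noncomputable def randMeasure (d n : ℕ) (p : ℝ≥0∞) : Measure (RandOmega d n) :=
  Measure.pi fun _ => bern p

/-- The random `d`-complex `G_d(n,p)` determined by the sample `ω`: full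
`(d-1)`-skeleton, and the `d`-faces chosen by `ω`. -/
def randCx (d n : ℕ) (ω : RandOmega d n) : Cx (Fin n) :=
  ⟨{s | s.card ≤ d ∨ ∃ h : s.card = d + 1, ω ⟨s, h⟩ = true}, by
    rintro s t hs hts
    rcases hs with h | ⟨h, hω⟩
    · exact Or.inl (le_trans (Finset.card_le_card hts) h)
    · have hle := Finset.card_le_card hts
      rcases eq_or_lt_of_le hle with heq | hlt
      · have : t = s := Finset.eq_of_subset_of_card_le hts (le_of_eq heq.symm)
        subst this; exact Or.inr ⟨h, hω⟩
      · exact Or.inl (by omega)⟩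

end Random

section Stmt0Aux

open Finset

variable {d k : ℕ}

/-- The `m`-th join factor's vertex set ("column"). -/
def col (d k : ℕ) (m : Fin (k+1)) : Finset (Fin (k+1) × Fin (d+1)) :=
  {m} ×ˢ Finset.univ

lemma mem_col {m : Fin (k+1)} {x : Fin (k+1) × Fin (d+1)} :
    x ∈ col d k m ↔ x.1 = m := by
  constructor
  · intro hx
    simp only [col, Finset.mem_product, Finset.mem_singleton] at hx
    exact hx.1
  · intro hx
    simp only [col, Finset.mem_product, Finset.mem_singleton]
    exact ⟨hx, Finset.mem_univ _⟩

lemma card_col (m : Fin (k+1)) : (col d k m).card = d + 1 := by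
  simp [col]

lemma col_injective : Function.Injective (col d k) := by
  intro a b h
  have : ((a, (0 : Fin (d+1))) : Fin (k+1) × Fin (d+1)) ∈ col d k b := by
    rw [← h]; exact mem_col.2 rfl
  exact mem_col.1 this

lemma bad_iff {s : Finset (Fin (k+1) × Fin (d+1))} (hcard : s.card = d + 1) :
    (¬ ∀ m : Fin (k+1), ∃ i : Fin (d+1), (m, i) ∉ s) ↔ ∃ m, s = col d k m := by
  constructor
  · intro h
    push_neg at h
    obtain ⟨m, hm⟩ := h
    refine ⟨m, ?_⟩
    have hsub : col d k m ⊆ s := by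
      intro x hx
      have hx1 : x.1 = m := mem_col.1 hx
      have := hm x.2
      rwa [← hx1, Prod.mk.eta] at this
    exact (Finset.eq_of_subset_of_card_le hsub (by rw [hcard, card_col])).symm
  · rintro ⟨m, rfl⟩ h
    obtain ⟨i, hi⟩ := h m
    exact hi (mem_col.2 rfl)

lemma natCard_subtype {α : Type*} [Fintype α] (p : α → Prop) [DecidablePred p] :
    Nat.card {x // p x} = (Finset.univ.filter p).card := by
  rw [Nat.card_eq_fintype_card, Fintype.card_subtype]

lemma card_base (S : Finset (Fin (k+1) × Fin (d+1))) (j : ℕ) :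
    (Finset.univ.filter fun s : Finset (Fin (k+1) × Fin (d+1)) =>
      s ⊆ S ∧ s.card = j).card = S.card.choose j := by
  rw [← Finset.card_powersetCard]
  congr 1
  ext s
  simp [Finset.mem_powersetCard]

lemma card_badfilter (S : Finset (Fin (k+1) × Fin (d+1))) :
    (Finset.univ.filter fun s : Finset (Fin (k+1) × Fin (d+1)) =>
      (s ⊆ S ∧ s.card = d + 1) ∧ ¬ ∀ m : Fin (k+1), ∃ i : Fin (d+1), (m, i) ∉ s).card
      = (Finset.univ.filter fun m : Fin (k+1) => col d k m ⊆ S).card := by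
  rw [← Finset.card_image_of_injective _ (col_injective (d := d) (k := k))]
  congr 1
  ext s
  simp only [Finset.mem_filter, Finset.mem_univ, true_and, Finset.mem_image]
  constructor
  · rintro ⟨⟨hsub, hcard⟩, hbad⟩
    obtain ⟨m, rfl⟩ := (bad_iff hcard).1 hbad
    exact ⟨m, hsub, rfl⟩
  · rintro ⟨m, hmS, rfl⟩
    exact ⟨⟨hmS, card_col m⟩, (bad_iff (card_col m)).2 ⟨m, rfl⟩⟩

lemma card_goodfilter (S : Finset (Fin (k+1) × Fin (d+1))) :
    (Finset.univ.filter fun s : Finset (Fin (k+1) × Fin (d+1)) =>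
      (s ⊆ S ∧ s.card = d + 1) ∧ ∀ m : Fin (k+1), ∃ i : Fin (d+1), (m, i) ∉ s).card
      = S.card.choose (d+1)
        - (Finset.univ.filter fun m : Fin (k+1) => col d k m ⊆ S).card := by
  have hsplit := Finset.card_filter_add_card_filter_not
    (s := Finset.univ.filter fun s : Finset (Fin (k+1) × Fin (d+1)) =>
      s ⊆ S ∧ s.card = d + 1)
    (p := fun s => ∀ m : Fin (k+1), ∃ i : Fin (d+1), (m, i) ∉ s)
  rw [Finset.filter_filter, Finset.filter_filter, card_base] at hsplit
  have h2 := card_badfilter (d := d) (k := k) S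
  omega

lemma singleton_good (hd : 1 ≤ d) {s : Finset (Fin (k+1) × Fin (d+1))}
    (hcard : s.card = 1) : ∀ m : Fin (k+1), ∃ i : Fin (d+1), (m, i) ∉ s := by
  obtain ⟨v, rfl⟩ := Finset.card_eq_one.1 hcard
  intro m
  set i : Fin (d+1) := if v.2 = 0 then ⟨1, by omega⟩ else 0 with hi
  have hne : i ≠ v.2 := by
    by_cases h0 : v.2 = 0
    · rw [hi, if_pos h0, h0]
      intro hcon
      have := congrArg Fin.val hcon
      simp at this
    · rw [hi, if_neg h0]
      intro hcon
      exact h0 hcon.symm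
  refine ⟨i, ?_⟩
  simp only [Finset.mem_singleton]
  intro h
  exact hne (congrArg Prod.snd h)

lemma fcount_induced_zero (hd : 1 ≤ d) (S : Finset (Fin (k+1) × Fin (d+1))) :
    (((Kjoin d k).skel d).induced S).fcount 0 = S.card := by
  classical
  have hiff : ∀ s ∈ (Finset.univ : Finset (Finset (Fin (k+1) × Fin (d+1)))),
      (s ∈ (((Kjoin d k).skel d).induced S).faces ∧ s.card = 0 + 1) ↔
      (s ⊆ S ∧ s.card = 1) := by
    intro s _
    simp only [Cx.induced, Cx.skel, Kjoin, Set.mem_setOf_eq, zero_add]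
    constructor
    · rintro ⟨⟨_, hsub⟩, hcard⟩; exact ⟨hsub, hcard⟩
    · rintro ⟨hsub, hcard⟩
      exact ⟨⟨⟨singleton_good hd hcard, by omega⟩, hsub⟩, hcard⟩
  rw [Cx.fcount, natCard_subtype, Finset.filter_congr hiff, card_base]
  exact Nat.choose_one_right _

lemma fcount_skel_zero (hd : 1 ≤ d) :
    ((Kjoin d k).skel d).fcount 0 = (k+1) * (d+1) := by
  classical
  have hiff : ∀ s ∈ (Finset.univ : Finset (Finset (Fin (k+1) × Fin (d+1)))),
      (s ∈ ((Kjoin d k).skel d).faces ∧ s.card = 0 + 1) ↔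
      (s ⊆ (Finset.univ : Finset (Fin (k+1) × Fin (d+1))) ∧ s.card = 1) := by
    intro s _
    simp only [Cx.skel, Kjoin, Set.mem_setOf_eq, zero_add]
    constructor
    · rintro ⟨_, hcard⟩; exact ⟨Finset.subset_univ s, hcard⟩
    · rintro ⟨_, hcard⟩
      exact ⟨⟨singleton_good hd hcard, by omega⟩, hcard⟩
  rw [Cx.fcount, natCard_subtype, Finset.filter_congr hiff, card_base,
    Nat.choose_one_right, Finset.card_univ]
  simp [Fintype.card_prod]

lemma fcount_induced_d (S : Finset (Fin (k+1) × Fin (d+1))) :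
    (((Kjoin d k).skel d).induced S).fcount d
      = S.card.choose (d+1)
        - (Finset.univ.filter fun m : Fin (k+1) => col d k m ⊆ S).card := by
  classical
  have hiff : ∀ s ∈ (Finset.univ : Finset (Finset (Fin (k+1) × Fin (d+1)))),
      (s ∈ (((Kjoin d k).skel d).induced S).faces ∧ s.card = d + 1) ↔
      ((s ⊆ S ∧ s.card = d + 1) ∧ ∀ m : Fin (k+1), ∃ i : Fin (d+1), (m, i) ∉ s) := by
    intro s _
    simp only [Cx.induced, Cx.skel, Kjoin, Set.mem_setOf_eq]
    constructor
    · rintro ⟨⟨⟨hgood, _⟩, hsub⟩, hcard⟩; exact ⟨⟨hsub, hcard⟩, hgood⟩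
    · rintro ⟨⟨hsub, hcard⟩, hgood⟩
      exact ⟨⟨⟨hgood, by omega⟩, hsub⟩, hcard⟩
  rw [Cx.fcount, natCard_subtype, Finset.filter_congr hiff, card_goodfilter]

lemma fcount_skel_d :
    ((Kjoin d k).skel d).fcount d = ((k+1)*(d+1)).choose (d+1) - (k+1) := by
  classical
  have hiff : ∀ s ∈ (Finset.univ : Finset (Finset (Fin (k+1) × Fin (d+1)))),
      (s ∈ ((Kjoin d k).skel d).faces ∧ s.card = d + 1) ↔
      ((s ⊆ (Finset.univ : Finset (Fin (k+1) × Fin (d+1))) ∧ s.card = d + 1) ∧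
        ∀ m : Fin (k+1), ∃ i : Fin (d+1), (m, i) ∉ s) := by
    intro s _
    simp only [Cx.skel, Kjoin, Set.mem_setOf_eq]
    constructor
    · rintro ⟨⟨hgood, _⟩, hcard⟩; exact ⟨⟨Finset.subset_univ s, hcard⟩, hgood⟩
    · rintro ⟨⟨_, hcard⟩, hgood⟩
      exact ⟨⟨hgood, by omega⟩, hcard⟩
  rw [Cx.fcount, natCard_subtype, Finset.filter_congr hiff, card_goodfilter,
    Finset.card_univ]
  congr 1
  · congr 1
    simp [Fintype.card_prod]
  · rw [Finset.filter_true_of_mem (fun m _ => Finset.subset_univ _), Finset.card_univ,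
      Fintype.card_fin]

lemma choose_mono_right {n a : ℕ} : ∀ {b : ℕ}, a ≤ b → b ≤ n/2 → n.choose a ≤ n.choose b := by
  intro b
  induction b with
  | zero =>
    intro h _
    obtain rfl : a = 0 := by omega
    exact le_refl _
  | succ b ih =>
    intro hab hb
    rcases Nat.lt_or_ge a (b+1) with h | h
    · exact le_trans (ih (by omega) (by omega)) (Nat.choose_le_succ_of_lt_half_left (by omega))
    · obtain rfl : a = b + 1 := by omega
      exact le_refl _

/-- The inner numeric inequality. -/
lemma inner_ineq (d k s c : ℕ) (hd : 1 ≤ d) (hk : 1 ≤ k) (hs1 : 1 ≤ s)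
    (hsn : s + 1 ≤ (k+1)*(d+1))
    (hc : s + 2 ≤ (k+1)*(d+1) ∨ 1 ≤ c) :
    s * (((k+1)*(d+1)-1).choose d) + (d+1) * c > s * ((s-1).choose d) + s := by
  obtain ⟨e, rfl⟩ : ∃ e, d = e + 1 := ⟨d - 1, by omega⟩
  obtain ⟨t, rfl⟩ : ∃ t, s = t + 1 := ⟨s - 1, by omega⟩
  set n := (k+1)*(e+1+1) with hn
  have hn4 : 2*(e+2) ≤ n := by rw [hn]; nlinarith
  simp only [Nat.add_sub_cancel]
  -- now goal : (t+1) * ((n-1).choose (e+1)) + (e+1+1) * c > (t+1) * (t.choose (e+1)) + (t+1)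
  have pascal : ∀ m : ℕ, (m+1).choose (e+1) = m.choose e + m.choose (e+1) :=
    fun m => Nat.choose_succ_succ m e
  rcases hc with hle | hc1
  · -- t + 3 ≤ n : show (n-1).choose (e+1) ≥ t.choose (e+1) + 2
    have key : t.choose (e+1) + 2 ≤ (n-1).choose (e+1) := by
      by_cases hsd : e + 1 ≤ t + 1
      · have h2 : (t+2).choose (e+1) ≤ (n-1).choose (e+1) :=
          Nat.choose_le_choose (e+1) (by omega)
        have e1 : (t+2).choose (e+1) = (t+1).choose e + (t+1).choose (e+1) := pascal (t+1)
        have e2 : (t+1).choose (e+1) = t.choose e + t.choose (e+1) := pascal t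
        have p1 : 1 ≤ (t+1).choose e := Nat.choose_pos (by omega)
        have p2 : 1 ≤ t.choose e := Nat.choose_pos (by omega)
        omega
      · have hz : t.choose (e+1) = 0 := Nat.choose_eq_zero_of_lt (by omega)
        have h2 : (e+2).choose (e+1) ≤ (n-1).choose (e+1) :=
          Nat.choose_le_choose (e+1) (by omega)
        have e1 : (e+2).choose (e+1) = e + 2 := Nat.choose_succ_self_right (e+1)
        omega
    nlinarith [key]
  · -- c ≥ 1
    by_cases hsd : e + 1 ≤ t + 1
    · have h2 : (t+1).choose (e+1) ≤ (n-1).choose (e+1) :=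
        Nat.choose_le_choose (e+1) (by omega)
      have e2 : (t+1).choose (e+1) = t.choose e + t.choose (e+1) := pascal t
      have p2 : 1 ≤ t.choose e := Nat.choose_pos (by omega)
      have hkey : t.choose (e+1) + 1 ≤ (n-1).choose (e+1) := by omega
      nlinarith [hkey, hc1]
    · have hz : t.choose (e+1) = 0 := Nat.choose_eq_zero_of_lt (by omega)
      have h2 : 1 ≤ (n-1).choose (e+1) := Nat.choose_pos (by omega)
      nlinarith [hc1]

/-- The key numeric inequality. -/
lemma key_ineq (d k s c : ℕ) (hd : 1 ≤ d) (hk : 1 ≤ k) (hs1 : 1 ≤ s)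
    (hsn : s + 1 ≤ (k+1)*(d+1))
    (hc : s + 2 ≤ (k+1)*(d+1) ∨ 1 ≤ c) :
    s * (((k+1)*(d+1)).choose (d+1)) + (k+1)*(d+1) * c
      > (k+1)*(d+1) * (s.choose (d+1)) + s * (k+1) := by
  set n := (k+1)*(d+1) with hn
  have hnpos : 0 < n := by positivity
  have id1 : n * ((n-1).choose d) = n.choose (d+1) * (d+1) := by
    have h : n = (n-1) + 1 := by omega
    calc n * ((n-1).choose d) = ((n-1)+1) * ((n-1).choose d) := by rw [← h]
      _ = ((n-1)+1).choose (d+1) * (d+1) := Nat.add_one_mul_choose_eq (n-1) d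
      _ = n.choose (d+1) * (d+1) := by rw [← h]
  have id2 : s * ((s-1).choose d) = s.choose (d+1) * (d+1) := by
    have h : s = (s-1) + 1 := by omega
    calc s * ((s-1).choose d) = ((s-1)+1) * ((s-1).choose d) := by rw [← h]
      _ = ((s-1)+1).choose (d+1) * (d+1) := Nat.add_one_mul_choose_eq (s-1) d
      _ = s.choose (d+1) * (d+1) := by rw [← h]
  have inner := inner_ineq d k s c hd hk hs1 hsn hc
  rw [← hn] at inner
  have hmul : n * (s * ((s-1).choose d) + s) < n * (s * ((n-1).choose d) + (d+1) * c) :=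
    mul_lt_mul_of_pos_left inner hnpos
  apply Nat.lt_of_mul_lt_mul_left (a := d+1)
  have lhs_eq : (d+1) * (n * (s.choose (d+1)) + s * (k+1))
      = n * (s * ((s-1).choose d) + s) := by
    have h1 : (d+1) * (n * (s.choose (d+1))) = n * (s * ((s-1).choose d)) := by
      calc (d+1) * (n * (s.choose (d+1))) = n * (s.choose (d+1) * (d+1)) := by ring
        _ = n * (s * ((s-1).choose d)) := by rw [← id2]
    have h2 : (d+1) * (s * (k+1)) = n * s := by rw [hn]; ring
    calc (d+1) * (n * (s.choose (d+1)) + s * (k+1))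
        = (d+1) * (n * (s.choose (d+1))) + (d+1) * (s * (k+1)) := by ring
      _ = n * (s * ((s-1).choose d)) + n * s := by rw [h1, h2]
      _ = n * (s * ((s-1).choose d) + s) := by ring
  have rhs_eq : (d+1) * (s * (n.choose (d+1)) + n * c)
      = n * (s * ((n-1).choose d) + (d+1) * c) := by
    have h1 : (d+1) * (s * (n.choose (d+1))) = n * (s * ((n-1).choose d)) := by
      calc (d+1) * (s * (n.choose (d+1))) = s * (n.choose (d+1) * (d+1)) := by ring
        _ = s * (n * ((n-1).choose d)) := by rw [← id1]
        _ = n * (s * ((n-1).choose d)) := by ring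
    calc (d+1) * (s * (n.choose (d+1)) + n * c)
        = (d+1) * (s * (n.choose (d+1))) + n * ((d+1) * c) := by ring
      _ = n * (s * ((n-1).choose d)) + n * ((d+1) * c) := by rw [h1]
      _ = n * (s * ((n-1).choose d) + (d+1) * c) := by ring
  rw [lhs_eq, rhs_eq]
  exact hmul

end Stmt0Aux

/-- The `d`-skeleton of the `(k+1)`-fold join of boundaries of
`d`-simplices is `d`-lumpless: for every nonempty proper vertex subset `S`,
`f₀(K⁽ᵈ⁾[S]) / f_d(K⁽ᵈ⁾[S]) > f₀(K⁽ᵈ⁾) / f_d(K⁽ᵈ⁾)` (cross-multiplied, which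
interprets the ratio as `+∞` when `f_d(K⁽ᵈ⁾[S]) = 0`). -/
theorem stmt0 (d k : ℕ) (hd : 1 ≤ d) (hk : 1 ≤ k)
    (S : Finset (Fin (k+1) × Fin (d+1))) (hS : S.Nonempty) (hS' : S ≠ Finset.univ) :
    (((Kjoin d k).skel d).induced S).fcount 0 * ((Kjoin d k).skel d).fcount d >
      ((Kjoin d k).skel d).fcount 0 * (((Kjoin d k).skel d).induced S).fcount d := by
  rw [fcount_induced_zero hd S, fcount_skel_zero hd, fcount_induced_d S, fcount_skel_d]
  set n := (k+1)*(d+1) with hn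
  set s := S.card with hs
  set c := (Finset.univ.filter fun m : Fin (k+1) => col d k m ⊆ S).card with hc
  have hs1 : 1 ≤ s := Finset.card_pos.2 hS
  have hsn : s + 1 ≤ n := by
    have : S ⊂ Finset.univ := Finset.ssubset_univ_iff.2 hS'
    have := Finset.card_lt_card this
    rw [Finset.card_univ] at this
    simp only [Fintype.card_prod, Fintype.card_fin] at this
    omega
  have hcase : s + 2 ≤ n ∨ 1 ≤ c := by
    by_cases hcol : ∃ m : Fin (k+1), col d k m ⊆ S
    · right
      obtain ⟨m, hm⟩ := hcol
      exact Finset.card_pos.2 ⟨m, Finset.mem_filter.2 ⟨Finset.mem_univ m, hm⟩⟩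
    · left
      push_neg at hcol
      have hmiss : ∀ m : Fin (k+1), ∃ i : Fin (d+1), (m, i) ∉ S := by
        intro m
        by_contra hcon
        push_neg at hcon
        exact hcol m (fun x hx => by
          have hx1 : x.1 = m := mem_col.1 hx
          have := hcon x.2
          rwa [← hx1, Prod.mk.eta] at this)
      choose f hf using hmiss
      have hinj : Function.Injective (fun m : Fin (k+1) => ((m, f m) : Fin (k+1) × Fin (d+1))) := by
        intro a b hab
        exact congrArg Prod.fst hab
      have hsub : Finset.univ.image (fun m : Fin (k+1) => ((m, f m) : Fin (k+1) × Fin (d+1))) ⊆ Sᶜ := by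
        intro x hx
        obtain ⟨m, _, rfl⟩ := Finset.mem_image.1 hx
        exact Finset.mem_compl.2 (hf m)
      have hcard : k + 1 ≤ Sᶜ.card := by
        have := Finset.card_le_card hsub
        rwa [Finset.card_image_of_injective _ hinj, Finset.card_univ, Fintype.card_fin] at this
      have : Sᶜ.card = Fintype.card (Fin (k+1) × Fin (d+1)) - s := by
        rw [Finset.card_compl, hs]
      simp only [Fintype.card_prod, Fintype.card_fin] at this
      omega
  have key := key_ineq d k s c hd hk hs1 hsn hcase
  rw [← hn] at key
  have e1 : s * (n.choose (d+1) - (k+1)) = s * n.choose (d+1) - s * (k+1) := by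
    rw [Nat.mul_sub_left_distrib]
  have e2 : n * (s.choose (d+1) - c) = n * s.choose (d+1) - n * c := by
    rw [Nat.mul_sub_left_distrib]
  rw [e1, e2]
  have hle : s * (k+1) ≤ s * n.choose (d+1) := by
    apply Nat.mul_le_mul_left
    calc k + 1 ≤ n := by rw [hn]; nlinarith
      _ = n.choose 1 := (Nat.choose_one_right n).symm
      _ ≤ n.choose (d+1) := by
          apply choose_mono_right (by omega)
          rw [Nat.le_div_iff_mul_le (by norm_num)]
          rw [hn]; nlinarith
  have hcS : c ≤ s.choose (d+1) := by
    rw [hc, hs, ← card_badfilter (d := d) (k := k) S]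
    calc (Finset.univ.filter fun t : Finset (Fin (k+1) × Fin (d+1)) =>
          (t ⊆ S ∧ t.card = d + 1) ∧ ¬ ∀ m : Fin (k+1), ∃ i : Fin (d+1), (m, i) ∉ t).card
        ≤ (Finset.univ.filter fun t : Finset (Fin (k+1) × Fin (d+1)) =>
          t ⊆ S ∧ t.card = d + 1).card :=
          Finset.card_le_card (Finset.monotone_filter_right _ (fun x _ hx => hx.1))
      _ = S.card.choose (d+1) := card_base S (d+1)
  have hle2 : n * c ≤ n * s.choose (d+1) := Nat.mul_le_mul_left n hcS
  have final : ∀ A B a b : ℕ, a ≤ A → b ≤ B → A + b > B + a → A - a > B - b := by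
    intro A B a b h1 h2 h3; omega
  exact final _ _ _ _ hle hle2 key
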